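/- Let π be a deterministic Markov policy of an MMDP and let π' be constructed by the backward sweep of the CADP algorithm: for t = T, T−1, …, 1 and each state s, π'_t(s) is chosen in argmax_{a∈A} Σ_{m∈M} b^π_{t,m}(s) · q_{t,m}(s,a), where b^π_{t,m} are the model weights induced by the old policy π and q_{t,m} is the state–action value function computed using the already-updated decision rules π'_{t+1},…,π'_T for steps after t. Then ρ(π') ≥ ρ(π). -/

import Mathlib

set_option autoImplicit false

open Finset

noncomputable section

/-- Value function of a deterministic Markov policy in one model of an MMDP, computed with
`n` remaining steps; `mmdpVDAux T p r pol n` corresponds to the value at time `T + 1 - n`. -/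
def mmdpVDAux {S A : Type*} [Fintype S] (T : ℕ)
    (p : S → A → S → ℝ) (r : ℕ → S → A → ℝ) (pol : ℕ → S → A) : ℕ → S → ℝ
  | 0 => fun _ => 0
  | n + 1 => fun s =>
      r (T - n) s (pol (T - n) s) +
        ∑ s' : S, p s (pol (T - n) s) s' * mmdpVDAux T p r pol n s'

/-- The value function `v^π_{t,m}` of a deterministic Markov policy. -/
def mmdpVD {S A : Type*} [Fintype S] (T : ℕ)
    (p : S → A → S → ℝ) (r : ℕ → S → A → ℝ) (pol : ℕ → S → A) (t : ℕ) : S → ℝ :=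
  mmdpVDAux T p r pol (T + 1 - t)

/-- The state-action value function `q^π_{t,m}`; it depends only on the decision rules of
`pol` at the time steps `t+1, …, T`. -/
def mmdpQD {S A : Type*} [Fintype S] (T : ℕ)
    (p : S → A → S → ℝ) (r : ℕ → S → A → ℝ) (pol : ℕ → S → A) (t : ℕ) (s : S) (a : A) : ℝ :=
  r t s a + ∑ s' : S, p s a s' * mmdpVD T p r pol (t + 1) s'

/-- Forward recursion for the model weights of one model, with initial weight `w0`;
the argument is `t - 1`, so `mmdpBDAux p pol w0 0 = w0` is the weight at time `1`. -/
def mmdpBDAux {S A : Type*} [Fintype S]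
    (p : S → A → S → ℝ) (pol : ℕ → S → A) (w0 : S → ℝ) : ℕ → S → ℝ
  | 0 => w0
  | k + 1 => fun s' => ∑ s : S, p s (pol (k + 1) s) s' * mmdpBDAux p pol w0 k s

/-- The model weight `b^π_{t,m}(s)` of a deterministic Markov policy, with initial weight
`w0 = λ_m · μ`. -/
def mmdpBD {S A : Type*} [Fintype S]
    (p : S → A → S → ℝ) (pol : ℕ → S → A) (w0 : S → ℝ) (t : ℕ) : S → ℝ :=
  mmdpBDAux p pol w0 (t - 1)

/-- The MMDP return `ρ(π) = Σ_m Σ_s b^π_{1,m}(s) · v^π_{1,m}(s)` with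
`b^π_{1,m}(s) = λ_m · μ(s)`. -/
def mmdpRetD {S A M : Type*} [Fintype S] [Fintype M] (T : ℕ)
    (p : M → S → A → S → ℝ) (r : M → ℕ → S → A → ℝ) (μ : S → ℝ) (lam : M → ℝ)
    (pol : ℕ → S → A) : ℝ :=
  ∑ m : M, ∑ s : S, lam m * μ s * mmdpVD T (p m) (r m) pol 1 s

/-!
Let `J_t(σ) = Σ_m Σ_s b^π_{t,m}(s) · v^σ_{t,m}(s)` (`weightedValue`), weighting by the old `π`.
Since `b^π_{t+1}` is the push-forward of `b^π_t` along `π_t`, for every `σ`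
`Σ_m Σ_s b^π_{t,m}(s) · q^σ_{t,m}(s, π_t(s)) = R_t + J_{t+1}(σ)` with `R_t` independent of `σ`.
Backward induction then gives `J_t(π) ≤ J_t(π')`:
`J_t(π) = R_t + J_{t+1}(π) ≤ R_t + J_{t+1}(π') = Σ b^π_t · q^{π'}_t(·, π_t) ≤ J_t(π')`,
the last step being the argmax choice of `π'_t`. At `t = 1` the weights are `λ_m μ` for every
policy, so `J_1(σ) = ρ(σ)`.
-/

section SingleModel

variable {S A : Type*} [Fintype S]

lemma mmdpVD_eq_mmdpQD (T : ℕ) (p : S → A → S → ℝ) (r : ℕ → S → A → ℝ) (pol : ℕ → S → A)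
    {t : ℕ} (ht : t ≤ T) (s : S) :
    mmdpVD T p r pol t s = mmdpQD T p r pol t s (pol t s) := by
  simp only [mmdpQD, mmdpVD]
  rw [show T + 1 - t = (T - t) + 1 by omega, show T + 1 - (t + 1) = T - t by omega]
  simp only [mmdpVDAux, Nat.sub_sub_self ht]

lemma mmdpVD_succ_self (T : ℕ) (p : S → A → S → ℝ) (r : ℕ → S → A → ℝ) (pol : ℕ → S → A) :
    mmdpVD T p r pol (T + 1) = 0 := by
  funext s
  simp only [mmdpVD, Nat.sub_self, mmdpVDAux, Pi.zero_apply]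

lemma mmdpBD_succ (p : S → A → S → ℝ) (pol : ℕ → S → A) (w0 : S → ℝ) {t : ℕ} (ht : 1 ≤ t)
    (s' : S) :
    mmdpBD p pol w0 (t + 1) s' = ∑ s : S, p s (pol t s) s' * mmdpBD p pol w0 t s := by
  obtain ⟨k, rfl⟩ : ∃ k, t = k + 1 := ⟨t - 1, by omega⟩
  rfl

lemma sum_mmdpBD_mul_sum_mul (p : S → A → S → ℝ) (pol : ℕ → S → A) (w0 : S → ℝ) {t : ℕ}
    (ht : 1 ≤ t) (f : S → ℝ) :
    ∑ s : S, mmdpBD p pol w0 t s * ∑ s' : S, p s (pol t s) s' * f s'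
      = ∑ s' : S, mmdpBD p pol w0 (t + 1) s' * f s' := by
  simp only [mmdpBD_succ p pol w0 ht, Finset.sum_mul, Finset.mul_sum]
  rw [Finset.sum_comm]
  exact Finset.sum_congr rfl fun s _ => Finset.sum_congr rfl fun s' _ => by ring

lemma sum_mmdpBD_mul_mmdpQD (T : ℕ) (p : S → A → S → ℝ) (r : ℕ → S → A → ℝ)
    (pol σ : ℕ → S → A) (w0 : S → ℝ) {t : ℕ} (ht : 1 ≤ t) :
    ∑ s : S, mmdpBD p pol w0 t s * mmdpQD T p r σ t s (pol t s)
      = ∑ s : S, mmdpBD p pol w0 t s * r t s (pol t s)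
        + ∑ s' : S, mmdpBD p pol w0 (t + 1) s' * mmdpVD T p r σ (t + 1) s' := by
  rw [← sum_mmdpBD_mul_sum_mul p pol w0 ht]
  simp only [mmdpQD, mul_add, Finset.sum_add_distrib]

end SingleModel

section MultiModel

variable {S A M : Type*} [Fintype S] [Fintype M]

def weightedValue (T : ℕ) (p : M → S → A → S → ℝ) (r : M → ℕ → S → A → ℝ) (w0 : M → S → ℝ)
    (pol σ : ℕ → S → A) (t : ℕ) : ℝ :=
  ∑ m : M, ∑ s : S, mmdpBD (p m) pol (w0 m) t s * mmdpVD T (p m) (r m) σ t s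

variable (T : ℕ) (p : M → S → A → S → ℝ) (r : M → ℕ → S → A → ℝ)

lemma mmdpRetD_eq_weightedValue (μ : S → ℝ) (lam : M → ℝ) (pol σ : ℕ → S → A) :
    mmdpRetD T p r μ lam σ = weightedValue T p r (fun m s => lam m * μ s) pol σ 1 := rfl

lemma weightedValue_succ_self (w0 : M → S → ℝ) (pol σ : ℕ → S → A) :
    weightedValue T p r w0 pol σ (T + 1) = 0 := by
  simp only [weightedValue, mmdpVD_succ_self, Pi.zero_apply, mul_zero, Finset.sum_const_zero]

lemma weightedValue_le_of_succ (w0 : M → S → ℝ) (pol pol' : ℕ → S → A) {t : ℕ}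
    (ht1 : 1 ≤ t) (htT : t ≤ T)
    (himp : ∀ s : S,
      ∑ m : M, mmdpBD (p m) pol (w0 m) t s * mmdpQD T (p m) (r m) pol' t s (pol t s)
        ≤ ∑ m : M, mmdpBD (p m) pol (w0 m) t s * mmdpQD T (p m) (r m) pol' t s (pol' t s))
    (hsucc : weightedValue T p r w0 pol pol (t + 1) ≤ weightedValue T p r w0 pol pol' (t + 1)) :
    weightedValue T p r w0 pol pol t ≤ weightedValue T p r w0 pol pol' t := by
  set b : M → S → ℝ := fun m => mmdpBD (p m) pol (w0 m) t
  have hexpand : ∀ σ : ℕ → S → A,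
      ∑ m : M, ∑ s : S, b m s * mmdpQD T (p m) (r m) σ t s (pol t s)
        = ∑ m : M, ∑ s : S, b m s * r m t s (pol t s) + weightedValue T p r w0 pol σ (t + 1) := by
    intro σ
    simp only [b, sum_mmdpBD_mul_mmdpQD T _ _ pol σ _ ht1, Finset.sum_add_distrib, weightedValue]
  calc weightedValue T p r w0 pol pol t
      = ∑ m : M, ∑ s : S, b m s * mmdpQD T (p m) (r m) pol t s (pol t s) := by
        simp only [weightedValue, mmdpVD_eq_mmdpQD T _ _ pol htT, b]
    _ ≤ ∑ m : M, ∑ s : S, b m s * mmdpQD T (p m) (r m) pol' t s (pol t s) := by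
        rw [hexpand, hexpand]
        exact add_le_add_right hsucc _
    _ ≤ ∑ m : M, ∑ s : S, b m s * mmdpQD T (p m) (r m) pol' t s (pol' t s) :=
        Finset.sum_comm.trans_le
          ((Finset.sum_le_sum fun s _ => himp s).trans_eq Finset.sum_comm)
    _ = weightedValue T p r w0 pol pol' t := by
        simp only [weightedValue, mmdpVD_eq_mmdpQD T _ _ pol' htT, b]

lemma weightedValue_le (w0 : M → S → ℝ) (pol pol' : ℕ → S → A)
    (himp : ∀ t : ℕ, 1 ≤ t → t ≤ T → ∀ s : S,
      ∑ m : M, mmdpBD (p m) pol (w0 m) t s * mmdpQD T (p m) (r m) pol' t s (pol t s)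
        ≤ ∑ m : M, mmdpBD (p m) pol (w0 m) t s * mmdpQD T (p m) (r m) pol' t s (pol' t s))
    {t : ℕ} (ht1 : 1 ≤ t) (htT : t ≤ T + 1) :
    weightedValue T p r w0 pol pol t ≤ weightedValue T p r w0 pol pol' t := by
  induction htT using Nat.decreasingInduction with
  | self => simp only [weightedValue_succ_self, le_refl]
  | of_succ k hk ih =>
    exact weightedValue_le_of_succ T p r w0 pol pol' ht1 (by omega) (himp k ht1 (by omega))
      (ih (by omega))

end MultiModel

theorem cadp_policy_improvement_general {S A M : Type*} [Fintype S] [Fintype M] (T : ℕ)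
    (p : M → S → A → S → ℝ) (r : M → ℕ → S → A → ℝ) (μ : S → ℝ) (lam : M → ℝ)
    (pol pol' : ℕ → S → A)
    (himp : ∀ t : ℕ, 1 ≤ t → t ≤ T → ∀ s : S, ∀ a : A,
      ∑ m : M, mmdpBD (p m) pol (fun s0 => lam m * μ s0) t s * mmdpQD T (p m) (r m) pol' t s a
        ≤ ∑ m : M, mmdpBD (p m) pol (fun s0 => lam m * μ s0) t s *
            mmdpQD T (p m) (r m) pol' t s (pol' t s)) :
    mmdpRetD T p r μ lam pol ≤ mmdpRetD T p r μ lam pol' := by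
  rw [mmdpRetD_eq_weightedValue T p r μ lam pol, mmdpRetD_eq_weightedValue T p r μ lam pol]
  exact weightedValue_le T p r _ pol pol' (fun t ht1 htT s => himp t ht1 htT s (pol t s)) le_rfl
    (by omega)

/-- CADP policy improvement: if `pol'` is obtained from `pol` by the backward sweep of CADP,
i.e., at every time step `t` and state `s` the action `pol' t s` maximizes
`Σ_m b^{pol}_{t,m}(s) · q^{pol'}_{t,m}(s,a)` over `a` (with the model weights induced by the
old policy `pol` and the state–action values computed with the already-updated decision rules
of `pol'` after step `t`), then `ρ(pol') ≥ ρ(pol)`. -/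
theorem cadp_policy_improvement {S A M : Type*} [Fintype S] [Fintype A] [Fintype M] (T : ℕ)
    (p : M → S → A → S → ℝ) (r : M → ℕ → S → A → ℝ) (μ : S → ℝ) (lam : M → ℝ)
    (hp0 : ∀ m s a s', 0 ≤ p m s a s') (hp1 : ∀ m s a, ∑ s' : S, p m s a s' = 1)
    (hμ0 : ∀ s, 0 ≤ μ s) (hμ1 : ∑ s : S, μ s = 1)
    (hlam0 : ∀ m, 0 ≤ lam m) (hlam1 : ∑ m : M, lam m = 1)
    (pol pol' : ℕ → S → A)
    (himp : ∀ t : ℕ, 1 ≤ t → t ≤ T → ∀ s : S, ∀ a : A,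
      ∑ m : M, mmdpBD (p m) pol (fun s0 => lam m * μ s0) t s * mmdpQD T (p m) (r m) pol' t s a
        ≤ ∑ m : M, mmdpBD (p m) pol (fun s0 => lam m * μ s0) t s *
            mmdpQD T (p m) (r m) pol' t s (pol' t s)) :
    mmdpRetD T p r μ lam pol ≤ mmdpRetD T p r μ lam pol' :=
  cadp_policy_improvement_general T p r μ lam pol pol' himp
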